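/- Let A be a primitive J(α,β)-axial algebra satisfying the (⋆) condition, with Frobenius form (·,·) normalized so that (c,c) = 1 for every primitive axis c. Let a ∈ A be a primitive axis and let d, f ∈ A, written as d = γ·a + d_α + d_β and f = ε·a + f_α + f_β with γ, ε ∈ F, d_α, f_α ∈ A_α(a), d_β, f_β ∈ A_β(a). Then (d_α, f_α) = (γε(β−1) − β(d,f) + (a, df))/(α−β) and (d_β, f_β) = −(γε(α−1) − α(d,f) + (a, df))/(α−β). -/

import Mathlib

variable (F : Type*) [Field F] (A : Type*) [NonUnitalNonAssocCommRing A]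
  [Module F A] [SMulCommClass F A A] [IsScalarTower F A A]

/-- The `l`-eigenspace of the left multiplication operator `ad_a`. -/
def eigSp (a : A) (l : F) : Submodule F A where
  carrier := {x | a * x = l • x}
  add_mem' := by
    intro x y hx hy
    simp only [Set.mem_setOf_eq] at *
    rw [mul_add, hx, hy, smul_add]
  zero_mem' := by simp
  smul_mem' := by
    intro c x hx
    simp only [Set.mem_setOf_eq] at *
    rw [mul_smul_comm, hx, smul_comm]

/-- `a` is a `J(α,β)`-axis: an idempotent whose adjoint is semisimple with
eigenvalues among `1, α, β`, satisfying the fusion law `J(α,β)`. -/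
structure IsJAxis (α β : F) (a : A) : Prop where
  idem : a * a = a
  decomp : eigSp F A a 1 ⊔ eigSp F A a α ⊔ eigSp F A a β = ⊤
  f11 : ∀ x ∈ eigSp F A a 1, ∀ y ∈ eigSp F A a 1, x * y ∈ eigSp F A a 1
  f1a : ∀ x ∈ eigSp F A a 1, ∀ y ∈ eigSp F A a α, x * y ∈ eigSp F A a α
  f1b : ∀ x ∈ eigSp F A a 1, ∀ y ∈ eigSp F A a β, x * y ∈ eigSp F A a β
  faa : ∀ x ∈ eigSp F A a α, ∀ y ∈ eigSp F A a α, x * y ∈ eigSp F A a 1 ⊔ eigSp F A a α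
  fab : ∀ x ∈ eigSp F A a α, ∀ y ∈ eigSp F A a β, x * y ∈ eigSp F A a β
  fbb : ∀ x ∈ eigSp F A a β, ∀ y ∈ eigSp F A a β, x * y ∈ eigSp F A a 1 ⊔ eigSp F A a α

/-- A primitive `J(α,β)`-axis: `A_1(a) = F·a`. -/
def IsPrimJAxis (α β : F) (a : A) : Prop :=
  IsJAxis F A α β a ∧ eigSp F A a 1 = Submodule.span F {a}

/-- `A` is a primitive `J(α,β)`-axial algebra: generated as an `F`-algebra by a
set of primitive `J(α,β)`-axes. -/
def IsJAxialAlg (α β : F) : Prop :=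
  ∃ S : Set A, (∀ a ∈ S, IsPrimJAxis F A α β a) ∧ NonUnitalAlgebra.adjoin F S = ⊤

/-- The `(⋆)` condition: for any two primitive axes `a, b`, writing
`b = x • a + bα + bβ`, the projection of `a` onto `A_1(b)` equals `x • b`. -/
def StarCond (α β : F) : Prop :=
  ∀ a b : A, IsPrimJAxis F A α β a → IsPrimJAxis F A α β b →
    ∀ x : F, ∀ bα ∈ eigSp F A a α, ∀ bβ ∈ eigSp F A a β, b = x • a + bα + bβ →
      ∃ aα ∈ eigSp F A b α, ∃ aβ ∈ eigSp F A b β, a = x • b + aα + aβ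

/-- A Frobenius form: a nonzero symmetric bilinear form that associates with
the product. -/
def IsFrobenius (B : A →ₗ[F] A →ₗ[F] F) : Prop :=
  B ≠ 0 ∧ (∀ u v, B u v = B v u) ∧ ∀ u v w, B u (v * w) = B (u * v) w

/-- `τ` is the Miyamoto involution associated to the axis `a`: it fixes
`A_1(a) ⊕ A_α(a)` pointwise and negates `A_β(a)`. -/
def IsMiyamoto (α β : F) (a : A) (τ : A →ₗ[F] A) : Prop :=
  (∀ x ∈ eigSp F A a 1 ⊔ eigSp F A a α, τ x = x) ∧ ∀ x ∈ eigSp F A a β, τ x = -x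

/-!
For an associative form, `(x, a y) = (a x, y)`, so eigenvectors of `ad_a` for distinct eigenvalues
are orthogonal. Since `a ∈ A_1(a)`, this gives `(d, f) = γε + (d_α, f_α) + (d_β, f_β)` and, applied to
`a d = γ a + α d_α + β d_β`, also `(a, d f) = (a d, f) = γε + α (d_α, f_α) + β (d_β, f_β)`.
Solving this linear system, of determinant `β - α`, gives both projections.
-/

section

variable {F A}

omit [IsScalarTower F A A]

theorem mem_eigSp {a x : A} {l : F} : x ∈ eigSp F A a l ↔ a * x = l • x := Iff.rfl

theorem mem_eigSp_one_self {a : A} (ha : a * a = a) : a ∈ eigSp F A a 1 := by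
  rw [mem_eigSp, ha, one_smul]

theorem apply_eq_zero_of_mem_eigSp_of_ne {B : A →ₗ[F] A →ₗ[F] F}
    (hassoc : ∀ u v w, B u (v * w) = B (u * v) w) {a x y : A} {l m : F}
    (hx : x ∈ eigSp F A a l) (hy : y ∈ eigSp F A a m) (hlm : l ≠ m) : B x y = 0 := by
  have h : m * B x y = l * B x y := by
    have := hassoc x a y
    rwa [mem_eigSp.1 hy, mul_comm x a, mem_eigSp.1 hx, map_smul, LinearMap.map_smul₂] at this
  exact (mul_eq_mul_right_iff.1 h).resolve_left hlm.symm

variable {B : A →ₗ[F] A →ₗ[F] F} {α β : F} {a d f dα dβ fα fβ : A} {γ ε : F}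

theorem apply_eq_of_eq_add_eigSp (hassoc : ∀ u v w, B u (v * w) = B (u * v) w)
    (hα1 : α ≠ 1) (hβ1 : β ≠ 1) (hαβ : α ≠ β) (haa : a * a = a) (hBaa : B a a = 1)
    (hdα : dα ∈ eigSp F A a α) (hdβ : dβ ∈ eigSp F A a β)
    (hfα : fα ∈ eigSp F A a α) (hfβ : fβ ∈ eigSp F A a β)
    (hd : d = γ • a + dα + dβ) (hf : f = ε • a + fα + fβ) :
    B d f = γ * ε + B dα fα + B dβ fβ := by
  have ha : a ∈ eigSp F A a 1 := mem_eigSp_one_self haa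
  have hortho {l m : F} {x y : A} (hx : x ∈ eigSp F A a l) (hy : y ∈ eigSp F A a m)
      (hlm : l ≠ m) : B x y = 0 := apply_eq_zero_of_mem_eigSp_of_ne hassoc hx hy hlm
  simp only [hd, hf, map_add, map_smul, LinearMap.add_apply, LinearMap.smul_apply, smul_eq_mul,
    hBaa, hortho ha hfα hα1.symm, hortho ha hfβ hβ1.symm, hortho hdα ha hα1,
    hortho hdβ ha hβ1, hortho hdα hfβ hαβ, hortho hdβ hfα hαβ.symm]
  ring

theorem apply_axis_mul_eq_of_eq_add_eigSp (hassoc : ∀ u v w, B u (v * w) = B (u * v) w)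
    (hα1 : α ≠ 1) (hβ1 : β ≠ 1) (hαβ : α ≠ β) (haa : a * a = a) (hBaa : B a a = 1)
    (hdα : dα ∈ eigSp F A a α) (hdβ : dβ ∈ eigSp F A a β)
    (hfα : fα ∈ eigSp F A a α) (hfβ : fβ ∈ eigSp F A a β)
    (hd : d = γ • a + dα + dβ) (hf : f = ε • a + fα + fβ) :
    B a (d * f) = γ * ε + α * B dα fα + β * B dβ fβ := by
  have had : a * d = γ • a + α • dα + β • dβ := by
    rw [hd, mul_add, mul_add, mul_smul_comm, haa, mem_eigSp.1 hdα, mem_eigSp.1 hdβ]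
  rw [hassoc, apply_eq_of_eq_add_eigSp hassoc hα1 hβ1 hαβ haa hBaa
    (Submodule.smul_mem _ α hdα) (Submodule.smul_mem _ β hdβ) hfα hfβ had hf]
  simp only [map_smul, LinearMap.smul_apply, smul_eq_mul]

end

theorem form_of_projections (α β : F)
    (hα1 : α ≠ 1) (hβ1 : β ≠ 1) (hαβ : α ≠ β)
    (B : A →ₗ[F] A →ₗ[F] F) (hB : IsFrobenius F A B)
    (hBnorm : ∀ c : A, IsPrimJAxis F A α β c → B c c = 1)
    (a : A) (ha : IsPrimJAxis F A α β a)
    (d f : A) (γ ε : F) (dα dβ fα fβ : A)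
    (hdα : dα ∈ eigSp F A a α) (hdβ : dβ ∈ eigSp F A a β)
    (hfα : fα ∈ eigSp F A a α) (hfβ : fβ ∈ eigSp F A a β)
    (hd : d = γ • a + dα + dβ) (hf : f = ε • a + fα + fβ) :
    B dα fα = (γ * ε * (β - 1) - β * B d f + B a (d * f)) / (α - β) ∧
    B dβ fβ = -((γ * ε * (α - 1) - α * B d f + B a (d * f)) / (α - β)) := by
  obtain ⟨-, -, hassoc⟩ := hB
  have hBaa : B a a = 1 := hBnorm a ha
  rw [apply_eq_of_eq_add_eigSp hassoc hα1 hβ1 hαβ ha.1.idem hBaa hdα hdβ hfα hfβ hd hf,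
    apply_axis_mul_eq_of_eq_add_eigSp hassoc hα1 hβ1 hαβ ha.1.idem hBaa hdα hdβ hfα hfβ hd hf]
  have hαβ' : α - β ≠ 0 := sub_ne_zero.2 hαβ
  constructor <;> field_simp <;> ring
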